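/- arXiv:1803.10834 — 2 statements merged into one kernel-verified Lean document; each statement's English description precedes it below -/
import Mathlib

section
/- Let α = (α_1, …, α_d) be rational numbers in (0,1), let m be the least common multiple of their denominators, and assume α is Galois-stable: for every integer c coprime to m, the multiset {cα_1 mod ℤ, …, cα_d mod ℤ} equals {α_1 mod ℤ, …, α_d mod ℤ}. Then for every prime p not dividing m and every integer k ≥ 0, the rational number (α_1)_k ⋯ (α_d)_k / k!^d is p-integral (its p-adic valuation is ≥ 0); equivalently, it lies in ℤ[1/m]. -/
/-!
Each factor `(αᵢ)_k / k!` is `p`-integral: since `p` does not divide the denominator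
of `αᵢ`, the rational `αᵢ` is a `p`-adic integer, and `‖(x)_k‖ ≤ ‖k!‖` on `ℤ_[p]` because the
polynomial `(x)_k` is continuous and `(n)_k / k!` is an integer for every natural `n`, which
is dense in `ℤ_[p]`.
-/

theorem map_ascPochhammer_eval {S T : Type*} [Semiring S] [Semiring T] (f : S →+* T) (k : ℕ)
    (s : S) : f ((ascPochhammer S k).eval s) = (ascPochhammer T k).eval (f s) := by
  rw [← Polynomial.eval₂_at_apply, ← ascPochhammer_eval₂]

namespace Padic

variable {p : ℕ} [Fact p.Prime]

theorem norm_ratCast_le_one_iff_padicValRat_nonneg (q : ℚ) :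
    ‖(q : ℚ_[p])‖ ≤ 1 ↔ 0 ≤ padicValRat p q := by
  rw [norm_le_one_iff_val_nonneg, valuation_ratCast]

theorem norm_ascPochhammer_eval_div_factorial_le_one {x : ℚ} (hx : ¬p ∣ x.den) (k : ℕ) :
    ‖(((ascPochhammer ℚ k).eval x / k.factorial : ℚ) : ℚ_[p])‖ ≤ 1 := by
  let y : ℤ_[p] := ⟨x, norm_rat_le_one hx⟩
  have hy : (((ascPochhammer ℚ k).eval x : ℚ) : ℚ_[p]) = (ascPochhammer ℤ_[p] k).eval y := by
    rw [← eq_ratCast (Rat.castHom ℚ_[p]), map_ascPochhammer_eval]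
    exact (map_ascPochhammer_eval PadicInt.Coe.ringHom k y).symm
  rw [Rat.cast_div, hy, norm_div, Rat.cast_natCast,
    div_le_one (by simpa using k.factorial_ne_zero)]
  exact_mod_cast y.norm_ascPochhammer_le k

end Padic

theorem hypergeometric_coefficients_p_integral_general
    (d : ℕ) (α : Fin d → ℚ)
    (m : ℕ) (hm : m = Finset.univ.lcm fun i => (α i).den)
    (p : ℕ) (hp : p.Prime) (hpm : ¬ p ∣ m) (k : ℕ) :
    0 ≤ padicValRat p
      ((∏ i, (ascPochhammer ℚ k).eval (α i)) / (k.factorial : ℚ) ^ d) := by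
  have : Fact p.Prime := ⟨hp⟩
  have hden : ∀ i, ¬p ∣ (α i).den := fun i h =>
    hpm (h.trans (hm ▸ Finset.dvd_lcm (Finset.mem_univ i)))
  have hsplit : (∏ i, (ascPochhammer ℚ k).eval (α i)) / (k.factorial : ℚ) ^ d
      = ∏ i, (ascPochhammer ℚ k).eval (α i) / k.factorial := by
    rw [Finset.prod_div_distrib, Finset.prod_const, Finset.card_univ, Fintype.card_fin]
  rw [← Padic.norm_ratCast_le_one_iff_padicValRat_nonneg, hsplit, Rat.cast_prod, norm_prod]
  exact Finset.prod_le_one (fun _ _ => norm_nonneg _)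
    fun i _ => Padic.norm_ascPochhammer_eval_div_factorial_le_one (hden i) k

/-- For a Galois-stable vector `α` of rationals in `(0,1)` with `m`
the lcm of the denominators, the hypergeometric coefficients
`(α₁)_k ⋯ (α_d)_k / k!^d` are `p`-integral for every prime `p ∤ m`. -/
theorem hypergeometric_coefficients_p_integral
    (d : ℕ) (α : Fin d → ℚ)
    (hα : ∀ i, 0 < α i ∧ α i < 1)
    (m : ℕ) (hm : m = Finset.univ.lcm fun i => (α i).den)
    (hgal : ∀ c : ℤ, IsCoprime c (m : ℤ) →
      Multiset.map (fun i => Int.fract ((c : ℚ) * α i)) Finset.univ.val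
        = Multiset.map α Finset.univ.val)
    (p : ℕ) (hp : p.Prime) (hpm : ¬ p ∣ m) (k : ℕ) :
    0 ≤ padicValRat p
      ((∏ i, (ascPochhammer ℚ k).eval (α i)) / (k.factorial : ℚ) ^ d) :=
  hypergeometric_coefficients_p_integral_general d α m hm p hp hpm k
end

section
/- Let α = (α_1, …, α_d) be rational numbers in (0,1), Galois-stable with m the lcm of their denominators, let p be an odd prime not dividing m, and let τ ∈ {1, −1}. If F_1(α,1^d|τ) is a p-adic unit (i.e., not divisible by p), then F_s(α,1^d|τ) is a p-adic unit for every s ≥ 1. -/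
/-!
Write `(α)_k / k! = Ring.multichoose α k`, which lives in `ℤ_[p]` because `p ∤ m`. Let `c` be an
inverse of `p` modulo `m` and `α'ᵢ = {c αᵢ}` the Dwork prime, so that `αᵢ + rᵢ = p α'ᵢ` with a digit
`0 ≤ rᵢ < p`. Lucas's theorem, extended from `ℕ` to `ℤ_[p]` by density, gives for `a < p`
`multichoose αᵢ (a + p b) ≡ multichoose αᵢ a · multichoose α'ᵢ b (mod p)`. Galois stability makes the
`α'ᵢ` a permutation of the `αᵢ`, and `τ^p ≡ τ`, so modulo `p` the summands `A(k) τ^k` are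
multiplicative in the base-`p` digits of `k`. Hence `F_s ≡ F_1^s (mod p)`.
-/

open Finset

theorem Ring.multichoose_eq_neg_one_pow_mul_choose_neg {R : Type*} [CommRing R] [BinomialRing R]
    (x : R) (k : ℕ) : Ring.multichoose x k = (-1) ^ k * Ring.choose (-x) k := by
  rw [Ring.choose_neg', Int.negOnePow_def, Units.smul_def]
  simp [← mul_assoc, ← mul_pow]

def hypergeomCoeff {ι R : Type*} [Fintype ι] [CommRing R] [BinomialRing R] (θ : ι → R)
    (k : ℕ) : R :=
  ∏ i, Ring.multichoose (θ i) k

theorem Finset.sum_range_mul_eq_mul {R : Type*} [CommSemiring R] {p : ℕ} {g : ℕ → R}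
    (hg : ∀ a < p, ∀ b, g (a + p * b) = g a * g b) (n : ℕ) :
    ∑ k ∈ range (p * n), g k = (∑ a ∈ range p, g a) * ∑ b ∈ range n, g b := by
  induction n with
  | zero => simp
  | succ n ih =>
    rw [Nat.mul_succ, sum_range_add, ih, sum_range_succ, mul_add, sum_mul _ _ (g n)]
    congr 1
    exact sum_congr rfl fun a ha => by rw [add_comm, hg a (mem_range.1 ha)]

theorem Finset.sum_range_pow_eq_pow {R : Type*} [CommSemiring R] {p : ℕ} {g : ℕ → R}
    (h0 : g 0 = 1) (hg : ∀ a < p, ∀ b, g (a + p * b) = g a * g b) (s : ℕ) :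
    ∑ k ∈ range (p ^ s), g k = (∑ a ∈ range p, g a) ^ s := by
  induction s with
  | zero => simp [h0]
  | succ s ih => rw [pow_succ', sum_range_mul_eq_mul hg, ih, pow_succ']

theorem Rat.exists_nat_lt_add_eq_mul_fract {q : ℚ} (hq0 : 0 ≤ q) (hq1 : q < 1) {n : ℕ}
    (hn : 0 < n) {c : ℤ} (hc : (q.den : ℤ) ∣ c * n - 1) :
    ∃ r : ℕ, r < n ∧ q + r = n * Int.fract (c * q) := by
  obtain ⟨e, he⟩ := hc
  set w : ℤ := e * q.num - n * ⌊c * q⌋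
  have hw : (w : ℚ) = n * Int.fract (c * q) - q := by
    have he' : (c * n - 1 : ℚ) = q.den * e := by exact_mod_cast he
    simp only [w, Int.fract, Int.cast_sub, Int.cast_mul, Int.cast_natCast, ← Rat.den_mul_eq_num q]
    linear_combination -q * he'
  have hfract0 := Int.fract_nonneg (c * q)
  have hfract1 := Int.fract_lt_one (c * q)
  have hw0 : -1 < w := by
    have : (-1 : ℚ) < w := by rw [hw]; nlinarith
    exact_mod_cast this
  have hwn : w < n := by
    have : (w : ℚ) < n := by rw [hw]; nlinarith [(Nat.cast_pos (α := ℚ)).2 hn]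
    exact_mod_cast this
  refine ⟨w.toNat, by omega, ?_⟩
  rw [show ((w.toNat : ℕ) : ℚ) = w by exact_mod_cast Int.toNat_of_nonneg (by omega), hw]
  ring

namespace PadicInt

variable {p : ℕ} [hp : Fact p.Prime]

theorem toZMod_choose_add_mul {r a : ℕ} (hr : r < p) (ha : a < p) (y : ℤ_[p]) (b : ℕ) :
    toZMod (Ring.choose ((r : ℤ_[p]) + (p : ℤ_[p]) * y) (a + p * b))
      = toZMod ((r.choose a : ℤ_[p]) * Ring.choose y b) := by
  -- both sides are continuous in `y`, so it suffices to check Lucas's theorem on `ℕ`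
  refine denseRange_natCast.induction_on y ?_ fun n => ?_
  · have hker := (Ideal.IsMaximal.isClosed (I := IsLocalRing.maximalIdeal ℤ_[p])).preimage
      (f := fun y => Ring.choose ((r : ℤ_[p]) + p * y) (a + p * b) - r.choose a * Ring.choose y b)
      (by fun_prop)
    rw [← ker_toZMod] at hker
    convert hker using 1
    ext y
    simp [sub_eq_zero]
  · have hlucas := Choose.choose_modEq_choose_mod_mul_choose_div_nat (p := p)
      (n := r + p * n) (k := a + p * b)
    simp only [Nat.add_mul_mod_self_left, Nat.add_mul_div_left _ _ hp.out.pos,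
      Nat.mod_eq_of_lt, Nat.div_eq_of_lt, hr, ha, zero_add] at hlucas
    rw [← Nat.cast_mul, ← Nat.cast_add, Ring.choose_natCast, Ring.choose_natCast]
    simpa using (ZMod.natCast_eq_natCast_iff _ _ _).2 hlucas

theorem toZMod_multichoose_add_mul {θ θ' : ℤ_[p]} {r a : ℕ} (hr : r < p) (ha : a < p)
    (hθ : θ + r = p * θ') (b : ℕ) :
    toZMod (Ring.multichoose θ (a + p * b))
      = toZMod (Ring.multichoose θ a) * toZMod (Ring.multichoose θ' b) := by
  have hneg : -θ = r + p * -θ' := by linear_combination -hθ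
  have hlow := toZMod_choose_add_mul hr ha (-θ') 0
  simp only [mul_zero, add_zero, Ring.choose_zero_right, mul_one] at hlow
  simp only [Ring.multichoose_eq_neg_one_pow_mul_choose_neg, map_mul, map_pow, map_neg, map_one,
    hneg, toZMod_choose_add_mul hr ha, hlow, pow_add, pow_mul, ZMod.pow_card]
  ring

section

variable {ι : Type*} [Fintype ι] {θ θ' : ι → ℤ_[p]} {r : ι → ℕ}

theorem toZMod_hypergeomCoeff_add_mul (hr : ∀ i, r i < p) (hθ : ∀ i, θ i + r i = p * θ' i)
    {a : ℕ} (ha : a < p) (b : ℕ) :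
    toZMod (hypergeomCoeff θ (a + p * b))
      = toZMod (hypergeomCoeff θ a) * toZMod (hypergeomCoeff θ' b) := by
  simp only [hypergeomCoeff, map_prod, toZMod_multichoose_add_mul (hr _) ha (hθ _),
    prod_mul_distrib]

theorem toZMod_sum_hypergeomCoeff_pow (hr : ∀ i, r i < p) (hθ : ∀ i, θ i + r i = p * θ' i)
    (hθθ' : hypergeomCoeff θ' = hypergeomCoeff θ) (t : ℤ_[p]) (s : ℕ) :
    toZMod (∑ k ∈ range (p ^ s), hypergeomCoeff θ k * t ^ k)
      = toZMod (∑ k ∈ range p, hypergeomCoeff θ k * t ^ k) ^ s := by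
  simp only [map_sum, map_mul, map_pow]
  refine sum_range_pow_eq_pow (by simp [hypergeomCoeff]) ?_ s
  intro a ha b
  rw [toZMod_hypergeomCoeff_add_mul hr hθ ha, hθθ', pow_add, pow_mul, ZMod.pow_card]
  ring

end

theorem exists_coe_eq_ratCast {q : ℚ} (hq : ¬ p ∣ q.den) : ∃ x : ℤ_[p], (x : ℚ_[p]) = q :=
  ⟨⟨q, Padic.norm_rat_le_one hq⟩, rfl⟩

theorem coe_multichoose (x : ℤ_[p]) (k : ℕ) :
    ((Ring.multichoose x k : ℤ_[p]) : ℚ_[p])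
      = (ascPochhammer ℚ_[p] k).eval (x : ℚ_[p]) / k.factorial := by
  have h := congrArg Coe.ringHom (Ring.factorial_nsmul_multichoose_eq_ascPochhammer x k)
  rw [← Polynomial.ascPochhammer_smeval_cast ℤ_[p], ← Polynomial.eval_eq_smeval,
    ← Polynomial.eval_map_apply, ascPochhammer_map, map_nsmul, nsmul_eq_mul] at h
  rw [eq_div_iff (by exact_mod_cast k.factorial_ne_zero), mul_comm]
  exact h

theorem coe_hypergeomCoeff {d : ℕ} {θ : Fin d → ℤ_[p]} {q : Fin d → ℚ}
    (hθ : ∀ i, (θ i : ℚ_[p]) = q i) (k : ℕ) :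
    ((hypergeomCoeff θ k : ℤ_[p]) : ℚ_[p])
      = (((∏ i, (ascPochhammer ℚ k).eval (q i)) / (k.factorial : ℚ) ^ d : ℚ) : ℚ_[p]) := by
  have hcast (x : ℚ) : (((ascPochhammer ℚ k).eval x : ℚ) : ℚ_[p])
      = (ascPochhammer ℚ_[p] k).eval (x : ℚ_[p]) := by
    rw [← ascPochhammer_map (Rat.castHom ℚ_[p])]
    exact (Polynomial.eval_map_apply (Rat.castHom ℚ_[p]) x).symm
  rw [hypergeomCoeff, show ((∏ i, Ring.multichoose (θ i) k : ℤ_[p]) : ℚ_[p])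
      = ∏ i, ((Ring.multichoose (θ i) k : ℤ_[p]) : ℚ_[p]) from map_prod Coe.ringHom _ _]
  simp only [coe_multichoose, hθ, prod_div_distrib, prod_const,
    card_univ, Fintype.card_fin, Rat.cast_div, Rat.cast_prod, hcast, Rat.cast_pow, Rat.cast_natCast]

theorem exists_lift_dworkPrime {d : ℕ} {α : Fin d → ℚ} (hα : ∀ i, 0 ≤ α i ∧ α i < 1)
    (hgal : ∀ c : ℤ, IsCoprime c ((univ.lcm fun i => (α i).den : ℕ) : ℤ) →
      Multiset.map (fun i => Int.fract ((c : ℚ) * α i)) univ.val = Multiset.map α univ.val)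
    (hpm : ¬ p ∣ univ.lcm fun i => (α i).den) :
    ∃ (θ θ' : Fin d → ℤ_[p]) (r : Fin d → ℕ), (∀ i, (θ i : ℚ_[p]) = α i) ∧ (∀ i, r i < p) ∧
      (∀ i, θ i + r i = p * θ' i) ∧ hypergeomCoeff θ' = hypergeomCoeff θ := by
  set m := univ.lcm fun i => (α i).den
  obtain ⟨c, v, hcv⟩ : IsCoprime (p : ℤ) m :=
    Nat.isCoprime_iff_coprime.2 ((Nat.Prime.coprime_iff_not_dvd hp.out).2 hpm)
  have hden_dvd (i) : (α i).den ∣ m := dvd_lcm (mem_univ i)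
  have hden (i) : ¬ p ∣ (α i).den := fun h => hpm (h.trans (hden_dvd i))
  set α' := fun i => Int.fract ((c : ℚ) * α i)
  have hden' (i) : ¬ p ∣ (α' i).den := fun h => hden i <| h.trans <| by
    simpa [α', Rat.den_intFract] using Rat.mul_den_dvd c (α i)
  choose r hr hrα using fun i => Rat.exists_nat_lt_add_eq_mul_fract (hα i).1 (hα i).2
    hp.out.pos (c := c) ((Int.natCast_dvd_natCast.2 (hden_dvd i)).trans ⟨-v, by linarith⟩)
  choose θ hθ using fun i => exists_coe_eq_ratCast (hden i)
  choose θ' hθ' using fun i => exists_coe_eq_ratCast (hden' i)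
  refine ⟨θ, θ', r, hθ, hr, fun i => Subtype.ext ?_, funext fun b => Subtype.ext ?_⟩
  · push_cast [hθ, hθ']
    exact_mod_cast hrα i
  · have hprod : ∏ i, (ascPochhammer ℚ b).eval (α' i) = ∏ i, (ascPochhammer ℚ b).eval (α i) := by
      simpa only [Multiset.map_map, Function.comp_def, ← prod_eq_multiset_prod] using
        congrArg (fun s => (s.map (ascPochhammer ℚ b).eval).prod) (hgal c ⟨p, v, by linarith⟩)
    rw [coe_hypergeomCoeff hθ', coe_hypergeomCoeff hθ, hprod]

theorem norm_eq_one_iff_toZMod_ne_zero (x : ℤ_[p]) : ‖x‖ = 1 ↔ toZMod x ≠ 0 := by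
  rw [← isUnit_iff, ne_eq, ← RingHom.mem_ker, ker_toZMod, IsLocalRing.mem_maximalIdeal,
    mem_nonunits_iff, not_not]

end PadicInt

theorem truncations_are_units_general
    (d : ℕ) (α : Fin d → ℚ)
    (hα : ∀ i, 0 < α i ∧ α i < 1)
    (m : ℕ) (hm : m = Finset.univ.lcm fun i => (α i).den)
    (hgal : ∀ c : ℤ, IsCoprime c (m : ℤ) →
      Multiset.map (fun i => Int.fract ((c : ℚ) * α i)) Finset.univ.val
        = Multiset.map α Finset.univ.val)
    (p : ℕ) [Fact p.Prime] (hpm : ¬ p ∣ m)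
    (τ : ℚ_[p]) (hτ : τ = 1 ∨ τ = -1)
    (F : ℕ → ℚ_[p])
    (hF : ∀ s, F s = ∑ k ∈ Finset.range (p ^ s),
      (((∏ i, (ascPochhammer ℚ k).eval (α i)) / (k.factorial : ℚ) ^ d : ℚ) : ℚ_[p])
        * τ ^ k)
    (hunit : ‖F 1‖ = 1)
    (s : ℕ) :
    ‖F s‖ = 1 := by
  subst hm
  obtain ⟨θ, θ', r, hθ, hr, hrel, hperm⟩ := PadicInt.exists_lift_dworkPrime (fun i => ⟨(hα i).1.le, (hα i).2⟩) hgal hpm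
  obtain ⟨t, rfl⟩ : ∃ t : ℤ_[p], (t : ℚ_[p]) = τ :=
    ⟨⟨τ, by rcases hτ with rfl | rfl <;> simp⟩, rfl⟩
  have hFt (s) : F s = ((∑ k ∈ range (p ^ s), hypergeomCoeff θ k * t ^ k : ℤ_[p]) : ℚ_[p]) := by
    simp [hF, PadicInt.coe_sum, PadicInt.coe_hypergeomCoeff hθ]
  rw [hFt, pow_one, ← PadicInt.norm_def, PadicInt.norm_eq_one_iff_toZMod_ne_zero] at hunit
  rw [hFt, ← PadicInt.norm_def, PadicInt.norm_eq_one_iff_toZMod_ne_zero,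
    PadicInt.toZMod_sum_hypergeomCoeff_pow hr hrel hperm]
  exact pow_ne_zero s hunit

/-- for Galois-stable `α` in `(0,1)`, an odd prime `p ∤ m`, and
`τ ∈ {1, -1}`, if `F_1(α,1^d|τ)` is a `p`-adic unit then so is `F_s(α,1^d|τ)`
for every `s ≥ 1`. -/
theorem truncations_are_units
    (d : ℕ) (α : Fin d → ℚ)
    (hα : ∀ i, 0 < α i ∧ α i < 1)
    (m : ℕ) (hm : m = Finset.univ.lcm fun i => (α i).den)
    (hgal : ∀ c : ℤ, IsCoprime c (m : ℤ) →
      Multiset.map (fun i => Int.fract ((c : ℚ) * α i)) Finset.univ.val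
        = Multiset.map α Finset.univ.val)
    (p : ℕ) [Fact p.Prime] (hodd : Odd p) (hpm : ¬ p ∣ m)
    (τ : ℚ_[p]) (hτ : τ = 1 ∨ τ = -1)
    (F : ℕ → ℚ_[p])
    (hF : ∀ s, F s = ∑ k ∈ Finset.range (p ^ s),
      (((∏ i, (ascPochhammer ℚ k).eval (α i)) / (k.factorial : ℚ) ^ d : ℚ) : ℚ_[p])
        * τ ^ k)
    (hunit : ‖F 1‖ = 1)
    (s : ℕ) (hs : 1 ≤ s) :
    ‖F s‖ = 1 :=
  truncations_are_units_general d α hα m hm hgal p hpm τ hτ F hF hunit s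
end
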